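/- arXiv:1911.12118 — 8 statements merged into one kernel-verified Lean document; each statement's English description precedes it below -/
import Mathlib

section
/- For every natural number k ≥ 1 and a formal parameter λ, the identity ∑_{s=0}^∞ λ^s · s! · C(k+s-1, k-1)^2 / ∏_{ℓ=1}^{k+s}(1+λℓ) = 1 / ∏_{ℓ=1}^{k-1}(1-λℓ) holds as an identity of formal power series in λ. -/
/-!
Let `R n = ∏_{ℓ<n} (1 + ℓX)`, `F k = ∏_{ℓ<k} (1 - ℓX)` and `T k s = X^s s! M(k,s)² / R (k+s+1)`,
where `M(k,s) = C(k+s-1, s)` is the multiset coefficient: for `k ≥ 1` this is the `s`-th summand,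
and `T 0 s` vanishes for `s > 0`. Splitting the factor `1 + (k+s+1)X` off `R (k+s+2)` writes
`(1 - kX) T (k+1) s` as a combination of terms of index `k` at `s` and `s+1`, and the recursion
`(s+1)! M(k+1,s+1)² = (s+1)! M(k,s+1)² + (s+2k+1) s! M(k+1,s)²` makes them telescope:
`(1 - kX) ∑_{s≤N} T (k+1) s ≡ ∑_{s≤N} T k s mod X^{N+1}`. Induction on `k`, starting from
`∑_s T 0 s = 1 = F 0`, gives `F k ∑_{s≤N} T k s ≡ 1 mod X^{N+1}`.
-/

open PowerSeries Finset
open scoped Nat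

namespace Nat

theorem succ_mul_multichoose_succ (k s : ℕ) :
    (s + 1) * k.multichoose (s + 1) = k * (k + 1).multichoose s := by
  have h := choose_succ_right_eq (k + s) s
  rw [multichoose_eq, multichoose_eq, show k + (s + 1) - 1 = k + s by omega,
    show k + 1 + s - 1 = k + s by omega]
  rw [show k + s - s = k by omega] at h
  linarith

theorem succ_multichoose (m s : ℕ) : (m + 1).multichoose s = (m + s).choose m := by
  rw [multichoose_eq, show m + 1 + s - 1 = m + s by omega, choose_symm_add]

theorem factorial_mul_multichoose_sq_succ (k s : ℕ) :
    (s + 1)! * (k + 1).multichoose (s + 1) ^ 2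
      = (s + 1)! * k.multichoose (s + 1) ^ 2
        + (s + 2 * k + 1) * (s ! * (k + 1).multichoose s ^ 2) := by
  have h := succ_mul_multichoose_succ k s
  rw [multichoose_succ_succ, factorial_succ]
  linear_combination (2 * s ! * (k + 1).multichoose s) * h

end Nat

noncomputable section

namespace PowerSeries

section CommRing

variable (R : Type*) [CommRing R]

def risingProd (n : ℕ) : R⟦X⟧ := ∏ ℓ ∈ range n, (1 + (ℓ : R⟦X⟧) * X)

def fallingProd (n : ℕ) : R⟦X⟧ := ∏ ℓ ∈ range n, (1 - (ℓ : R⟦X⟧) * X)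

variable {R}

theorem risingProd_succ (n : ℕ) :
    risingProd R (n + 1) = risingProd R n * (1 + (n : R⟦X⟧) * X) :=
  prod_range_succ _ n

theorem fallingProd_succ (n : ℕ) :
    fallingProd R (n + 1) = fallingProd R n * (1 - (n : R⟦X⟧) * X) :=
  prod_range_succ _ n

theorem risingProd_succ_eq_prod (n : ℕ) :
    risingProd R (n + 1) = ∏ ℓ ∈ range n, (1 + C ((ℓ + 1 : ℕ) : R) * X) := by
  simp [risingProd, prod_range_succ']

theorem fallingProd_succ_eq_prod (n : ℕ) :
    fallingProd R (n + 1) = ∏ ℓ ∈ range n, (1 - C ((ℓ + 1 : ℕ) : R) * X) := by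
  simp [fallingProd, prod_range_succ']

@[simp]
theorem constantCoeff_fallingProd (n : ℕ) : constantCoeff (fallingProd R n) = 1 := by
  simp [fallingProd, map_prod]

end CommRing

variable {K : Type*} [Field K]

variable (K) in
def risingTerm (k s c : ℕ) : K⟦X⟧ := X ^ s * (c : K⟦X⟧) * (risingProd K (k + s + 1))⁻¹

theorem X_pow_dvd_risingTerm (k s c : ℕ) : X ^ s ∣ risingTerm K k s c :=
  (dvd_mul_right _ _).mul_right _

theorem risingTerm_add (k s c d : ℕ) :
    risingTerm K k s (c + d) = risingTerm K k s c + risingTerm K k s d := by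
  simp only [risingTerm, Nat.cast_add]
  ring

theorem one_sub_mul_risingTerm_succ (k s c : ℕ) :
    (1 - (k : K⟦X⟧) * X) * risingTerm K (k + 1) s c
      = risingTerm K k s c - risingTerm K k (s + 1) ((s + 2 * k + 1) * c) := by
  have hP : risingProd K (k + 1 + s + 1)
      = risingProd K (k + s + 1) * (1 + ((k + s + 1 : ℕ) : K⟦X⟧) * X) := by
    rw [← risingProd_succ]; congr 1; omega
  have hu : (1 + ((k + s + 1 : ℕ) : K⟦X⟧) * X) * (1 + ((k + s + 1 : ℕ) : K⟦X⟧) * X)⁻¹ = 1 :=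
    PowerSeries.mul_inv_cancel _ (by simp)
  simp only [risingTerm, show k + (s + 1) + 1 = k + 1 + s + 1 by omega, hP,
    PowerSeries.mul_inv_rev]
  push_cast at hu ⊢
  linear_combination (X ^ s * (c : K⟦X⟧) * (risingProd K (k + s + 1))⁻¹) * hu

theorem one_sub_mul_sum_risingTerm_succ (k : ℕ) {a b : ℕ → ℕ} (h0 : a 0 = b 0)
    (hsucc : ∀ s, a (s + 1) = b (s + 1) + (s + 2 * k + 1) * a s) (N : ℕ) :
    (1 - (k : K⟦X⟧) * X) * ∑ s ∈ range (N + 1), risingTerm K (k + 1) s (a s)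
      = ∑ s ∈ range (N + 1), risingTerm K k s (b s)
        - risingTerm K k (N + 1) ((N + 2 * k + 1) * a N) := by
  induction N with
  | zero => simp [one_sub_mul_risingTerm_succ, h0]
  | succ N ih =>
    have hlast : risingTerm K k (N + 1) (a (N + 1))
        = risingTerm K k (N + 1) (b (N + 1))
          + risingTerm K k (N + 1) ((N + 2 * k + 1) * a N) := by
      rw [hsucc, risingTerm_add]
    rw [sum_range_succ, mul_add, ih, one_sub_mul_risingTerm_succ, hlast, sum_range_succ _ (N + 1)]
    abel

variable (K) in
def risingSum (k N : ℕ) : K⟦X⟧ :=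
  ∑ s ∈ range (N + 1), risingTerm K k s (s ! * k.multichoose s ^ 2)

theorem risingSum_zero_left (N : ℕ) : risingSum K 0 N = 1 := by
  rw [risingSum, sum_eq_single 0]
  · simp [risingTerm, risingProd]
  · intro s _ hs
    obtain ⟨s, rfl⟩ := Nat.exists_eq_succ_of_ne_zero hs
    simp [risingTerm]
  · simp

theorem X_pow_dvd_fallingProd_mul_risingSum_sub_one (k N : ℕ) :
    X ^ (N + 1) ∣ fallingProd K k * risingSum K k N - 1 := by
  induction k with
  | zero => simp [risingSum_zero_left, fallingProd]
  | succ k ih =>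
    obtain ⟨r, hr, hstep⟩ : ∃ r, X ^ (N + 1) ∣ r ∧
        (1 - (k : K⟦X⟧) * X) * risingSum K (k + 1) N = risingSum K k N - r :=
      ⟨_, X_pow_dvd_risingTerm _ _ _,
        one_sub_mul_sum_risingTerm_succ k (by simp) (Nat.factorial_mul_multichoose_sq_succ k) N⟩
    have hsplit : fallingProd K (k + 1) * risingSum K (k + 1) N - 1
        = (fallingProd K k * risingSum K k N - 1) - fallingProd K k * r := by
      rw [fallingProd_succ, mul_assoc, hstep]
      ring
    rw [hsplit]
    exact dvd_sub ih (hr.mul_left _)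

theorem coeff_risingSum_eq_coeff_inv_fallingProd (k N : ℕ) :
    coeff N (risingSum K k N) = coeff N (fallingProd K k)⁻¹ := by
  have hF : (fallingProd K k)⁻¹ * fallingProd K k = 1 := PowerSeries.inv_mul_cancel _ (by simp)
  have hdvd : X ^ (N + 1) ∣ risingSum K k N - (fallingProd K k)⁻¹ := by
    have := (X_pow_dvd_fallingProd_mul_risingSum_sub_one (K := K) k N).mul_left (fallingProd K k)⁻¹
    rwa [mul_sub, ← mul_assoc, hF, one_mul, mul_one] at this
  rw [← sub_eq_zero, ← map_sub]
  exact X_pow_dvd_iff.mp hdvd N N.lt_succ_self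

end PowerSeries

end

/-- For every `k ≥ 1`, the identity
`∑_{s=0}^∞ λ^s s! C(k+s-1,k-1)² / ∏_{ℓ=1}^{k+s}(1+λℓ) = 1 / ∏_{ℓ=1}^{k-1}(1-λℓ)`
holds in `ℂ[[λ]]`.  The infinite sum converges in the `λ`-adic topology: the `N`-th
coefficient only receives contributions from the terms with `s ≤ N` (the `s`-th term is
divisible by `λ^s`), so the identity is stated coefficientwise via the stabilized
partial sums. -/
theorem falling_rising_factorial_identity (k : ℕ) (hk : 1 ≤ k) :
    ∀ N : ℕ,
      (PowerSeries.coeff (R := ℂ) N)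
        (∑ s ∈ Finset.range (N + 1),
          PowerSeries.X ^ s * PowerSeries.C (R := ℂ) (s.factorial : ℂ)
            * PowerSeries.C (R := ℂ) ((((k + s - 1).choose (k - 1)) ^ 2 : ℕ) : ℂ)
            * (∏ ℓ ∈ Finset.range (k + s),
                (1 + PowerSeries.C (R := ℂ) ((ℓ + 1 : ℕ) : ℂ) * PowerSeries.X))⁻¹)
      =
      (PowerSeries.coeff (R := ℂ) N)
        (∏ ℓ ∈ Finset.range (k - 1),
          (1 - PowerSeries.C (R := ℂ) ((ℓ + 1 : ℕ) : ℂ) * PowerSeries.X))⁻¹ := by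
  intro N
  obtain ⟨m, rfl⟩ := Nat.exists_eq_add_of_le' hk
  rw [Nat.add_sub_cancel, ← fallingProd_succ_eq_prod,
    ← coeff_risingSum_eq_coeff_inv_fallingProd, risingSum]
  refine congrArg _ (sum_congr rfl fun s _ => ?_)
  rw [risingTerm, risingProd_succ_eq_prod, Nat.succ_multichoose,
    show m + 1 + s - 1 = m + s by omega]
  simp only [map_natCast, map_pow, Nat.cast_mul, Nat.cast_pow]
  ring
end

section
/- For any compact subset K of ℂ ∖ ℕ₀ there exist constants c, C > 0 such that c^n · n! ≤ |z·(z-1)···(z-n+1)| ≤ C^n · n! for all z ∈ K and all n ∈ ℕ₀. -/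
/-!
Each factor `z - j` is comparable to `j + 1` uniformly on `K`: from above because `K` is
bounded, and from below because `K` keeps a positive distance `δ` from the closed set `ℕ`,
which handles the finitely many `j ≤ 2R + 1` (where `‖z‖ ≤ R` on `K`), while for larger `j`
already `‖z - j‖ ≥ j - R ≥ (j + 1) / 2`. Multiplying these factorwise bounds gives the
factorial bounds, since `∏_{j<n} (j + 1) = n!`.
-/

open Finset

theorem pow_mul_factorial_eq_prod_range (c : ℝ) (n : ℕ) :
    c ^ n * n.factorial = ∏ j ∈ range n, c * ((j : ℝ) + 1) := by
  rw [prod_mul_distrib, prod_const, card_range, ← prod_range_add_one_eq_factorial]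
  push_cast
  rfl

theorem pow_mul_factorial_le_prod_range {c : ℝ} (hc : 0 ≤ c) {a : ℕ → ℝ}
    (ha : ∀ j : ℕ, c * ((j : ℝ) + 1) ≤ a j) (n : ℕ) :
    c ^ n * n.factorial ≤ ∏ j ∈ range n, a j := by
  rw [pow_mul_factorial_eq_prod_range]
  exact prod_le_prod (fun j _ => by positivity) (fun j _ => ha j)

theorem prod_range_le_pow_mul_factorial {C : ℝ} {a : ℕ → ℝ} (ha₀ : ∀ j, 0 ≤ a j)
    (ha : ∀ j : ℕ, a j ≤ C * ((j : ℝ) + 1)) (n : ℕ) :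
    ∏ j ∈ range n, a j ≤ C ^ n * n.factorial := by
  rw [pow_mul_factorial_eq_prod_range]
  exact prod_le_prod (fun j _ => ha₀ j) (fun j _ => ha j)

namespace RCLike

variable {𝕜 : Type*} [RCLike 𝕜]

theorem isClosed_range_natCast : IsClosed (Set.range ((↑) : ℕ → 𝕜)) := by
  refine (Metric.isClosedEmbedding_of_pairwise_le_dist zero_lt_one
    fun m n hmn => ?_).isClosed_range
  have hcast : (m : 𝕜) - n = ((m - n : ℝ) : 𝕜) := by push_cast; rfl
  show 1 ≤ dist (m : 𝕜) n
  rw [dist_eq_norm, hcast, norm_ofReal, ← Real.dist_eq, Nat.dist_cast_real]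
  exact Nat.pairwise_one_le_dist hmn

theorem exists_pos_le_norm_sub_natCast {K : Set 𝕜} (hK : IsCompact K)
    (hKnat : ∀ z ∈ K, ∀ n : ℕ, z ≠ n) : ∃ δ > 0, ∀ z ∈ K, ∀ n : ℕ, δ ≤ ‖z - n‖ := by
  obtain ⟨r, hr, hrK⟩ := Metric.exists_pos_forall_lt_edist hK isClosed_range_natCast
    (Set.disjoint_right.mpr fun _ ⟨n, hn⟩ hz => hKnat _ hz n hn.symm)
  refine ⟨r, hr, fun z hz n => ?_⟩
  have hr_lt := hrK z hz n ⟨n, rfl⟩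
  rw [edist_dist, ← ENNReal.ofReal_coe_nnreal, ← dist_eq_norm] at *
  exact (ENNReal.ofReal_lt_ofReal_iff'.1 hr_lt).1.le

theorem norm_sub_natCast_le {z : 𝕜} {R : ℝ} (hz : ‖z‖ ≤ R) (hR : 0 ≤ R) (j : ℕ) :
    ‖z - j‖ ≤ (R + 1) * ((j : ℝ) + 1) := by
  have hj : (0 : ℝ) ≤ j := j.cast_nonneg
  calc ‖z - j‖ ≤ ‖z‖ + j := by simpa using norm_sub_le z (j : 𝕜)
    _ ≤ (R + 1) * ((j : ℝ) + 1) := by nlinarith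

theorem mul_succ_le_norm_sub_natCast {z : 𝕜} {R δ : ℝ} (hz : ‖z‖ ≤ R) (hR : 0 < R)
    (hδ₀ : 0 ≤ δ) {j : ℕ} (hδ : δ ≤ ‖z - j‖) :
    min (1 / 2) (δ / (2 * R + 2)) * ((j : ℝ) + 1) ≤ ‖z - j‖ := by
  rcases le_or_gt ((j : ℝ) + 1) (2 * R + 2) with hj | hj
  · calc min (1 / 2) (δ / (2 * R + 2)) * ((j : ℝ) + 1)
        ≤ δ / (2 * R + 2) * (2 * R + 2) := by gcongr; exact min_le_right _ _
      _ = δ := by field_simp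
      _ ≤ ‖z - j‖ := hδ
  · calc min (1 / 2) (δ / (2 * R + 2)) * ((j : ℝ) + 1) ≤ 1 / 2 * ((j : ℝ) + 1) := by
          gcongr; exact min_le_left _ _
      _ ≤ j - ‖z‖ := by linarith
      _ ≤ ‖z - j‖ := by simpa [norm_sub_rev] using norm_sub_norm_le (j : 𝕜) z

theorem exists_pos_norm_sub_natCast_le_mul_succ {K : Set 𝕜} (hK : Bornology.IsBounded K) :
    ∃ C > 0, ∀ z ∈ K, ∀ j : ℕ, ‖z - j‖ ≤ C * ((j : ℝ) + 1) := by
  obtain ⟨R, hR, hRK⟩ := hK.exists_pos_norm_le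
  exact ⟨R + 1, by linarith, fun z hz j => norm_sub_natCast_le (hRK z hz) hR.le j⟩

theorem exists_pos_mul_succ_le_norm_sub_natCast {K : Set 𝕜} (hK : IsCompact K)
    (hKnat : ∀ z ∈ K, ∀ n : ℕ, z ≠ n) :
    ∃ c > 0, ∀ z ∈ K, ∀ j : ℕ, c * ((j : ℝ) + 1) ≤ ‖z - j‖ := by
  obtain ⟨R, hR, hRK⟩ := hK.isBounded.exists_pos_norm_le
  obtain ⟨δ, hδ, hδK⟩ := exists_pos_le_norm_sub_natCast hK hKnat
  exact ⟨min (1 / 2) (δ / (2 * R + 2)), lt_min one_half_pos (by positivity),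
    fun z hz j => mul_succ_le_norm_sub_natCast (hRK z hz) hR hδ.le (hδK z hz j)⟩

end RCLike

/-- For any compact subset `K` of `ℂ ∖ ℕ₀` there exist constants
`c, C > 0` such that `c^n · n! ≤ |z(z-1)⋯(z-n+1)| ≤ C^n · n!` for all `z ∈ K` and all
`n ∈ ℕ₀`, where `z^(↓n) = ∏_{j=0}^{n-1}(z - j)` is the falling factorial. -/
theorem falling_factorial_bounds_on_compact (K : Set ℂ) (hK : IsCompact K)
    (hKnat : ∀ z ∈ K, ∀ n : ℕ, z ≠ (n : ℂ)) :
    ∃ c C : ℝ, 0 < c ∧ 0 < C ∧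
      ∀ z ∈ K, ∀ n : ℕ,
        c ^ n * n.factorial ≤ ‖∏ j ∈ Finset.range n, (z - (j : ℂ))‖ ∧
        ‖∏ j ∈ Finset.range n, (z - (j : ℂ))‖ ≤ C ^ n * n.factorial := by
  obtain ⟨c, hc, hlow⟩ := RCLike.exists_pos_mul_succ_le_norm_sub_natCast hK hKnat
  obtain ⟨C, hC, hup⟩ := RCLike.exists_pos_norm_sub_natCast_le_mul_succ hK.isBounded
  refine ⟨c, C, hc, hC, fun z hz n => ?_⟩
  rw [norm_prod]
  exact ⟨pow_mul_factorial_le_prod_range hc.le (hlow z hz) n,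
    prod_range_le_pow_mul_factorial (fun _ => norm_nonneg _) (hup z hz) n⟩
end

section
/- Let ν₀,...,ν_n ∈ {+1,-1} and λ a formal parameter. The 'reduced' product defined on the free ℂ[[λ]]-module with formal basis symbols e(P,Q) (indexed by pairs P,Q ∈ ℕ₀^{1+n} with |P|=|Q|) by e(P,Q) ⋆_red e(R,S) = ∑_{T ≤ min{Q,R}} sgn(T) · ( (1/λ)^(↓|Q+R-T|) / ( (1/λ)^(↓|Q|) · (1/λ)^(↓|R|) ) ) · T! C(Q,T) C(R,T) e(P+R-T, Q+S-T) has well-defined coefficients in ℂ[[λ]] (all negative powers of λ cancel). -/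
/-!
Each factor `1/λ - j` of a falling factorial equals `λ⁻¹ (1 - jλ)`, so
`(1/λ)^(↓N) = λ^(-N) u_N` with `u_N` a power series of constant term `1`, hence a unit of
`ℂ⟦λ⟧`. The coefficient is therefore `λ^(|Q|+|R|-|Q+R-T|)` times a power series, and this
exponent is nonnegative.
-/

open PowerSeries Finset

variable {K : Type*} [Field K]

namespace LaurentSeries

local notation "φ" => HahnSeries.ofPowerSeries ℤ K

theorem ofPowerSeries_inv_mem_range {u : K⟦X⟧} (hu : constantCoeff u ≠ 0) :
    (φ u)⁻¹ ∈ (φ).range := by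
  obtain ⟨v, rfl⟩ := PowerSeries.isUnit_iff_constantCoeff.mpr hu.isUnit
  exact ⟨↑v⁻¹, map_units_inv (φ) v⟩

theorem ofPowerSeries_ne_zero_of_constantCoeff_ne_zero {u : K⟦X⟧} (hu : constantCoeff u ≠ 0) :
    φ u ≠ 0 :=
  (map_ne_zero_iff _ HahnSeries.ofPowerSeries_injective).mpr
    (ne_of_apply_ne constantCoeff (by simpa))

theorem prod_range_inv_X_sub_natCast (N : ℕ) :
    ∏ j ∈ range N, ((φ X)⁻¹ - (j : LaurentSeries K))
      = (φ X)⁻¹ ^ N * φ (∏ j ∈ range N, (1 - C (j : K) * X)) := by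
  have hX : (φ X : LaurentSeries K) ≠ 0 := by simp
  have factor (j : ℕ) :
      (φ X)⁻¹ - (j : LaurentSeries K) = (φ X)⁻¹ * φ (1 - C (j : K) * X) := by
    rw [map_sub, map_one, map_mul, HahnSeries.ofPowerSeries_C, map_natCast, mul_sub, mul_one,
      mul_left_comm, inv_mul_cancel₀ hX, mul_one]
  rw [prod_congr rfl fun j _ ↦ factor j, prod_mul_distrib, prod_const, card_range, map_prod]

theorem C_mul_inv_X_pow_mul_div_mem_range (c : K) {m q r : ℕ} (hm : m ≤ q + r) (a : K⟦X⟧)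
    {b d : K⟦X⟧} (hb : constantCoeff b ≠ 0) (hd : constantCoeff d ≠ 0) :
    HahnSeries.C c * ((φ X)⁻¹ ^ m * φ a) / ((φ X)⁻¹ ^ q * φ b * ((φ X)⁻¹ ^ r * φ d))
      ∈ (φ).range := by
  obtain ⟨t, ht⟩ := Nat.exists_eq_add_of_le hm
  have hX : (φ X : LaurentSeries K) ≠ 0 := by simp
  have hb' := ofPowerSeries_ne_zero_of_constantCoeff_ne_zero hb
  have hd' := ofPowerSeries_ne_zero_of_constantCoeff_ne_zero hd
  have key : HahnSeries.C c * ((φ X)⁻¹ ^ m * φ a) / ((φ X)⁻¹ ^ q * φ b * ((φ X)⁻¹ ^ r * φ d))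
      = φ (PowerSeries.C c * X ^ t * a) * (φ b)⁻¹ * (φ d)⁻¹ := by
    have hpow : (φ X)⁻¹ ^ m = (φ X)⁻¹ ^ q * (φ X)⁻¹ ^ r * φ X ^ t := by
      rw [← pow_add, ht, pow_add, mul_assoc, ← mul_pow, inv_mul_cancel₀ hX, one_pow, mul_one]
    rw [map_mul, map_mul, map_pow, HahnSeries.ofPowerSeries_C, hpow]
    field_simp
  rw [key]
  exact mul_mem (mul_mem ⟨_, rfl⟩ (ofPowerSeries_inv_mem_range hb)) (ofPowerSeries_inv_mem_range hd)

theorem C_mul_prod_range_inv_X_sub_natCast_div_mem_range (c : K) {m q r : ℕ} (hm : m ≤ q + r) :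
    HahnSeries.C c * (∏ j ∈ range m, ((φ X)⁻¹ - (j : LaurentSeries K)))
        / ((∏ j ∈ range q, ((φ X)⁻¹ - (j : LaurentSeries K)))
          * (∏ j ∈ range r, ((φ X)⁻¹ - (j : LaurentSeries K)))) ∈ (φ).range := by
  simp only [prod_range_inv_X_sub_natCast]
  exact C_mul_inv_X_pow_mul_div_mem_range c hm _ (by simp) (by simp)

end LaurentSeries

theorem reduced_star_coefficient_is_power_series_general
    (n : ℕ) (ν : Fin (n + 1) → ℤ)
    (Q R T : Fin (n + 1) → ℕ) :
    ∃ f : PowerSeries ℂ,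
      (HahnSeries.ofPowerSeries ℤ ℂ f : LaurentSeries ℂ)
        = HahnSeries.C ((∏ k, ((ν k : ℂ)) ^ (T k)) * (∏ k, ((T k).factorial : ℂ))
              * (∏ k, ((Q k).choose (T k) : ℂ)) * (∏ k, ((R k).choose (T k) : ℂ)))
          * (∏ j ∈ Finset.range (∑ k, (Q k + R k - T k)),
              (((HahnSeries.ofPowerSeries ℤ ℂ PowerSeries.X : LaurentSeries ℂ))⁻¹ - (j : LaurentSeries ℂ)))
          / ((∏ j ∈ Finset.range (∑ k, Q k),
                (((HahnSeries.ofPowerSeries ℤ ℂ PowerSeries.X : LaurentSeries ℂ))⁻¹ - (j : LaurentSeries ℂ)))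
            * (∏ j ∈ Finset.range (∑ k, R k),
                (((HahnSeries.ofPowerSeries ℤ ℂ PowerSeries.X : LaurentSeries ℂ))⁻¹ - (j : LaurentSeries ℂ)))) := by
  refine RingHom.mem_range.mp
    (LaurentSeries.C_mul_prod_range_inv_X_sub_natCast_div_mem_range _ ?_)
  rw [← sum_add_distrib]
  exact sum_le_sum fun k _ ↦ Nat.sub_le _ _

/-- Well-definedness of the coefficients of the reduced star product:
for signs `ν_k ∈ {±1}`, multiindices `P,Q,R,S ∈ ℕ₀^{1+n}` with `|P| = |Q|`, `|R| = |S|`,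
and `T ≤ min{Q,R}`, the structure coefficient
`sgn(T) · (1/λ)^(↓|Q+R-T|) / ((1/λ)^(↓|Q|) · (1/λ)^(↓|R|)) · T! C(Q,T) C(R,T)`
— a priori only a Laurent series in `λ` (here `1/λ = X⁻¹` in the field of formal
Laurent series `ℂ⸨X⸩`) — is in fact a formal power series: all negative powers of `λ`
cancel. -/
theorem reduced_star_coefficient_is_power_series
    (n : ℕ) (ν : Fin (n + 1) → ℤ) (hν : ∀ k, ν k = 1 ∨ ν k = -1)
    (P Q R S T : Fin (n + 1) → ℕ)
    (hPQ : ∑ k, P k = ∑ k, Q k) (hRS : ∑ k, R k = ∑ k, S k)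
    (hT : ∀ k, T k ≤ min (Q k) (R k)) :
    ∃ f : PowerSeries ℂ,
      (HahnSeries.ofPowerSeries ℤ ℂ f : LaurentSeries ℂ)
        = HahnSeries.C ((∏ k, ((ν k : ℂ)) ^ (T k)) * (∏ k, ((T k).factorial : ℂ))
              * (∏ k, ((Q k).choose (T k) : ℂ)) * (∏ k, ((R k).choose (T k) : ℂ)))
          * (∏ j ∈ Finset.range (∑ k, (Q k + R k - T k)),
              (((HahnSeries.ofPowerSeries ℤ ℂ PowerSeries.X : LaurentSeries ℂ))⁻¹ - (j : LaurentSeries ℂ)))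
          / ((∏ j ∈ Finset.range (∑ k, Q k),
                (((HahnSeries.ofPowerSeries ℤ ℂ PowerSeries.X : LaurentSeries ℂ))⁻¹ - (j : LaurentSeries ℂ)))
            * (∏ j ∈ Finset.range (∑ k, R k),
                (((HahnSeries.ofPowerSeries ℤ ℂ PowerSeries.X : LaurentSeries ℂ))⁻¹ - (j : LaurentSeries ℂ)))) :=
  reduced_star_coefficient_is_power_series_general n ν Q R T
end

section
/- With the reduced star product at a complex number ℏ ∉ {1/k : k ∈ ℕ} ∪ {0}, for fixed P,Q,R,S ∈ ℕ₀^{1+n} with |P|=|Q|, |R|=|S|, each structure coefficient ℏ ↦ sgn(T) · (1/ℏ)^(↓|Q+R-T|) / ( (1/ℏ)^(↓|Q|) (1/ℏ)^(↓|R|) ) · T! C(Q,T) C(R,T) is a rational function of ℏ whose limit as ℏ → 0 is nonzero only for T = 0, where it equals 1. -/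
/-!
Writing `ℏ⁻¹ - j = (1 - jℏ) / ℏ`, the falling factorial `(1/ℏ)^(↓N)` becomes `F_N(ℏ) / ℏ^N` with
`F_N = ∏_{j<N} (1 - jX)`. Since `|Q + R - T| + |T| = |Q| + |R|`, the coefficient is
`c · ℏ^{|T|} F_{|Q+R-T|}(ℏ) / (F_{|Q|}(ℏ) F_{|R|}(ℏ))`. On `StarDomain` no factor `1 - jℏ` vanishes,
and the denominator is `1` at `ℏ = 0`, so the limit is the value of this rational function at `0`:
`c` if `T = 0` (and then `c = 1`), and `0` otherwise. Here `c = sgn(T) T! C(Q,T) C(R,T)`.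
-/

open scoped BigOperators

/-- The domain `Ω = ℂ ∖ ({1/k : k ∈ ℕ, k ≥ 1} ∪ {0})` of the strict reduced star
product. -/
def StarDomain : Set ℂ := {h : ℂ | h ≠ 0 ∧ ∀ k : ℕ, 1 ≤ k → h ≠ 1 / (k : ℂ)}

open Polynomial Finset Filter Topology

/-- The reversal `X^N (1/X)^(↓N)` of the falling factorial. -/
noncomputable def revFalling (R : Type*) [CommRing R] (N : ℕ) : R[X] :=
  ∏ j ∈ range N, (1 - C (j : R) * X)

theorem eval_revFalling {R : Type*} [CommRing R] (N : ℕ) (h : R) :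
    (revFalling R N).eval h = ∏ j ∈ range N, (1 - (j : R) * h) := by
  simp [revFalling, eval_prod]

section RationalFunction

variable {K : Type*} [Field K]

theorem prod_range_inv_sub_natCast {h : K} (h0 : h ≠ 0) (N : ℕ) :
    ∏ j ∈ range N, (h⁻¹ - (j : K)) = (revFalling K N).eval h / h ^ N := by
  have hfactor : ∀ j ∈ range N, h⁻¹ - (j : K) = (1 - j * h) / h := fun j _ => by field_simp
  rw [prod_congr rfl hfactor, prod_div_distrib, prod_const, card_range, eval_revFalling]

theorem prod_range_inv_sub_div_eq_div_eval {h : K} (h0 : h ≠ 0) {m t a b : ℕ}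
    (hmt : m + t = a + b) :
    (∏ j ∈ range m, (h⁻¹ - (j : K))) /
        ((∏ j ∈ range a, (h⁻¹ - (j : K))) * ∏ j ∈ range b, (h⁻¹ - (j : K))) =
      (X ^ t * revFalling K m).eval h / (revFalling K a * revFalling K b).eval h := by
  have hpow : h ^ a * h ^ b = h ^ m * h ^ t := by rw [← pow_add, ← pow_add, hmt]
  simp only [prod_range_inv_sub_natCast h0, eval_mul, eval_pow, eval_X]
  rw [div_mul_div_comm, div_div_eq_mul_div, hpow]
  field_simp

end RationalFunction

theorem eval_revFalling_ne_zero {h : ℂ} (hh : h ∈ StarDomain) (N : ℕ) :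
    (revFalling ℂ N).eval h ≠ 0 := by
  rw [eval_revFalling, prod_ne_zero_iff]
  intro j _ hj
  rcases Nat.eq_zero_or_pos j with rfl | hpos
  · simp at hj
  · have hj0 : (j : ℂ) ≠ 0 := by exact_mod_cast hpos.ne'
    exact hh.2 j hpos ((eq_div_iff hj0).mpr (by linear_combination -hj))

theorem tendsto_nhdsWithin_of_eqOn_div_eval {K : Type*} [Field K] [TopologicalSpace K]
    [IsTopologicalDivisionRing K] {f : K → K} {s : Set K} {p q : K[X]} {x : K}
    (hf : ∀ h ∈ s, f h = p.eval h / q.eval h) (hq : q.eval x ≠ 0) :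
    Tendsto f (𝓝[s] x) (𝓝 (p.eval x / q.eval x)) := by
  have hcont : ContinuousAt (fun h => p.eval h / q.eval h) x :=
    p.continuous.continuousAt.div q.continuous.continuousAt hq
  refine (hcont.tendsto.mono_left nhdsWithin_le_nhds).congr' ?_
  filter_upwards [self_mem_nhdsWithin] with h hh
  exact (hf h hh).symm

section Coefficient

variable {K ι : Type*} [Field K] [Fintype ι] (ν : ι → ℤ) (Q R T : ι → ℕ)

def reducedStarCoeff (h : K) : K :=
  (∏ k, ((ν k : K)) ^ (T k))
    * (∏ j ∈ range (∑ k, (Q k + R k - T k)), (h⁻¹ - (j : K)))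
    / ((∏ j ∈ range (∑ k, Q k), (h⁻¹ - (j : K)))
        * (∏ j ∈ range (∑ k, R k), (h⁻¹ - (j : K))))
    * (∏ k, ((T k).factorial : K)) * (∏ k, ((Q k).choose (T k) : K))
    * (∏ k, ((R k).choose (T k) : K))

noncomputable def reducedStarCoeffNum : K[X] :=
  C ((∏ k, ((ν k : K)) ^ (T k)) * (∏ k, ((T k).factorial : K))
      * (∏ k, ((Q k).choose (T k) : K)) * (∏ k, ((R k).choose (T k) : K)))
    * (X ^ (∑ k, T k) * revFalling K (∑ k, (Q k + R k - T k)))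

noncomputable def reducedStarCoeffDen : K[X] :=
  revFalling K (∑ k, Q k) * revFalling K (∑ k, R k)

variable {Q R T}

theorem sum_tsub_add_sum_eq (hT : ∀ k, T k ≤ Q k + R k) :
    ∑ k, (Q k + R k - T k) + ∑ k, T k = ∑ k, Q k + ∑ k, R k := by
  have hle : ∀ k ∈ univ, T k ≤ Q k + R k := fun k _ => hT k
  rw [sum_tsub_distrib _ hle, tsub_add_cancel_of_le (sum_le_sum hle), sum_add_distrib]

theorem reducedStarCoeff_eq_div_eval (hT : ∀ k, T k ≤ Q k + R k) {h : K} (h0 : h ≠ 0) :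
    reducedStarCoeff ν Q R T h =
      (reducedStarCoeffNum ν Q R T).eval h / (reducedStarCoeffDen (K := K) Q R).eval h := by
  rw [reducedStarCoeffNum, reducedStarCoeffDen, eval_mul, eval_C, mul_div_assoc,
    ← prod_range_inv_sub_div_eq_div_eval h0 (sum_tsub_add_sum_eq hT), reducedStarCoeff]
  ring

variable (Q R)

theorem eval_zero_reducedStarCoeffDen : (reducedStarCoeffDen (K := K) Q R).eval 0 = 1 := by
  simp [reducedStarCoeffDen, eval_revFalling]

theorem eval_zero_reducedStarCoeffNum [DecidableEq ι] :
    (reducedStarCoeffNum ν Q R T).eval (0 : K) = if T = 0 then 1 else 0 := by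
  split_ifs with hT0
  · simp [reducedStarCoeffNum, hT0, eval_revFalling]
  · have hsum : ∑ k, T k ≠ 0 := fun hsum =>
      hT0 (funext fun k => sum_eq_zero_iff.mp hsum k (mem_univ k))
    simp [reducedStarCoeffNum, zero_pow hsum]

end Coefficient

theorem reduced_star_coefficient_rational_and_limit_general
    (n : ℕ) (ν : Fin (n + 1) → ℤ)
    (Q R T : Fin (n + 1) → ℕ)
    (hT : ∀ k, T k ≤ min (Q k) (R k)) :
    (∃ p q : Polynomial ℂ, ∀ h ∈ StarDomain,
        Polynomial.eval h q ≠ 0 ∧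
        ((∏ k, ((ν k : ℂ)) ^ (T k))
            * (∏ j ∈ Finset.range (∑ k, (Q k + R k - T k)), (h⁻¹ - (j : ℂ)))
            / ((∏ j ∈ Finset.range (∑ k, Q k), (h⁻¹ - (j : ℂ)))
                * (∏ j ∈ Finset.range (∑ k, R k), (h⁻¹ - (j : ℂ))))
            * (∏ k, ((T k).factorial : ℂ)) * (∏ k, ((Q k).choose (T k) : ℂ))
            * (∏ k, ((R k).choose (T k) : ℂ)))
          = Polynomial.eval h p / Polynomial.eval h q)
    ∧
    Filter.Tendsto
      (fun h : ℂ =>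
        (∏ k, ((ν k : ℂ)) ^ (T k))
          * (∏ j ∈ Finset.range (∑ k, (Q k + R k - T k)), (h⁻¹ - (j : ℂ)))
          / ((∏ j ∈ Finset.range (∑ k, Q k), (h⁻¹ - (j : ℂ)))
              * (∏ j ∈ Finset.range (∑ k, R k), (h⁻¹ - (j : ℂ))))
          * (∏ k, ((T k).factorial : ℂ)) * (∏ k, ((Q k).choose (T k) : ℂ))
          * (∏ k, ((R k).choose (T k) : ℂ)))
      (nhdsWithin 0 StarDomain)
      (nhds (if T = 0 then (1 : ℂ) else 0)) := by
  have hTle : ∀ k, T k ≤ Q k + R k := fun k => (hT k).trans ((min_le_left _ _).trans le_self_add)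
  have hrat : ∀ h ∈ StarDomain, reducedStarCoeff ν Q R T h =
      (reducedStarCoeffNum ν Q R T).eval h / (reducedStarCoeffDen Q R).eval h :=
    fun h hh => reducedStarCoeff_eq_div_eval ν hTle hh.1
  refine ⟨⟨_, _, fun h hh => ⟨?_, hrat h hh⟩⟩, ?_⟩
  · rw [reducedStarCoeffDen, eval_mul]
    exact mul_ne_zero (eval_revFalling_ne_zero hh _) (eval_revFalling_ne_zero hh _)
  · have hlim := tendsto_nhdsWithin_of_eqOn_div_eval hrat
      (by rw [eval_zero_reducedStarCoeffDen]; exact one_ne_zero)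
    rwa [eval_zero_reducedStarCoeffNum, eval_zero_reducedStarCoeffDen, div_one] at hlim

/-- For fixed multiindices `P,Q,R,S ∈ ℕ₀^{1+n}` with `|P| = |Q|`,
`|R| = |S|` and `T ≤ min{Q,R}`, the structure coefficient
`ℏ ↦ sgn(T) · (1/ℏ)^(↓|Q+R-T|) / ((1/ℏ)^(↓|Q|) (1/ℏ)^(↓|R|)) · T! C(Q,T) C(R,T)`
of the strict reduced star product is a rational function of `ℏ` on `Ω` whose limit as
`ℏ → 0` (within `Ω`) is nonzero only for `T = 0`, where it equals `1`. -/
theorem reduced_star_coefficient_rational_and_limit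
    (n : ℕ) (ν : Fin (n + 1) → ℤ) (hν : ∀ k, ν k = 1 ∨ ν k = -1)
    (P Q R S T : Fin (n + 1) → ℕ)
    (hPQ : ∑ k, P k = ∑ k, Q k) (hRS : ∑ k, R k = ∑ k, S k)
    (hT : ∀ k, T k ≤ min (Q k) (R k)) :
    (∃ p q : Polynomial ℂ, ∀ h ∈ StarDomain,
        Polynomial.eval h q ≠ 0 ∧
        ((∏ k, ((ν k : ℂ)) ^ (T k))
            * (∏ j ∈ Finset.range (∑ k, (Q k + R k - T k)), (h⁻¹ - (j : ℂ)))
            / ((∏ j ∈ Finset.range (∑ k, Q k), (h⁻¹ - (j : ℂ)))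
                * (∏ j ∈ Finset.range (∑ k, R k), (h⁻¹ - (j : ℂ))))
            * (∏ k, ((T k).factorial : ℂ)) * (∏ k, ((Q k).choose (T k) : ℂ))
            * (∏ k, ((R k).choose (T k) : ℂ)))
          = Polynomial.eval h p / Polynomial.eval h q)
    ∧
    Filter.Tendsto
      (fun h : ℂ =>
        (∏ k, ((ν k : ℂ)) ^ (T k))
          * (∏ j ∈ Finset.range (∑ k, (Q k + R k - T k)), (h⁻¹ - (j : ℂ)))
          / ((∏ j ∈ Finset.range (∑ k, Q k), (h⁻¹ - (j : ℂ)))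
              * (∏ j ∈ Finset.range (∑ k, R k), (h⁻¹ - (j : ℂ))))
          * (∏ k, ((T k).factorial : ℂ)) * (∏ k, ((Q k).choose (T k) : ℂ))
          * (∏ k, ((R k).choose (T k) : ℂ)))
      (nhdsWithin 0 StarDomain)
      (nhds (if T = 0 then (1 : ℂ) else 0)) :=
  reduced_star_coefficient_rational_and_limit_general n ν Q R T hT
end

section
/- Identity of reduced monomials: with ν₁,...,ν_n ∈ {±1}, for P,Q ∈ ℕ₀^{1+n} with |P|=|Q|, the function w ↦ w^{P'} w̄^{Q'} / (1+∑_k ν_k w^k w̄^k)^{|P|} on {w ∈ ℂⁿ : 1+∑ν_k|w^k|² > 0} equals ∑_{T ∈ ℕ₀ⁿ, |T| ≤ min{P₀,Q₀}} (-1)^{|T|} sgn(T) C(min{P₀,Q₀}, |T|) (|T|!/T!) · w^{P'+T} w̄^{Q'+T} / (1+∑_k ν_k w^k w̄^k)^{max{|P'+T|,|Q'+T|}}. -/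
open scoped BigOperators ComplexConjugate

/-- Expansion of reduced monomials in terms of the fundamental
monomials: with signs `ν₁,…,ν_n ∈ {±1}` and `P, Q ∈ ℕ₀^{1+n}` with `|P| = |Q|`, for
every `w ∈ ℂⁿ` with `1 + ∑_k ν_k |w^k|² > 0` one has
`w^{P'} w̄^{Q'} / (1+∑ν_k w^k w̄^k)^{|P|}
  = ∑_{T ∈ ℕ₀ⁿ, |T| ≤ min{P₀,Q₀}} (-1)^{|T|} sgn(T) C(min{P₀,Q₀},|T|) (|T|!/T!)
      · w^{P'+T} w̄^{Q'+T} / (1+∑ν_k w^k w̄^k)^{max{|P'+T|,|Q'+T|}}`,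
where `P' = (P₁,…,P_n)`, `Q' = (Q₁,…,Q_n)` and `sgn(T) = ∏_k ν_k^{T_k}`. -/
theorem reduced_monomial_expansion_in_fundamentals
    (n : ℕ) (ν : Fin n → ℤ) (hν : ∀ k, ν k = 1 ∨ ν k = -1)
    (P Q : Fin (n + 1) → ℕ) (hPQ : ∑ k, P k = ∑ k, Q k)
    (w : Fin n → ℂ)
    (hw : 0 < 1 + ∑ k, (ν k : ℝ) * Complex.normSq (w k)) :
    (∏ k, w k ^ P k.succ) * (∏ k, (conj (w k)) ^ Q k.succ)
        / (1 + ∑ k, (ν k : ℂ) * (w k * conj (w k))) ^ (∑ k, P k)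
      =
      ∑ T ∈ (Finset.Iic (fun _ => min (P 0) (Q 0) : Fin n → ℕ)).filter
          (fun T => ∑ k, T k ≤ min (P 0) (Q 0)),
        (-1 : ℂ) ^ (∑ k, T k) * (∏ k, ((ν k : ℂ)) ^ (T k))
          * ((min (P 0) (Q 0)).choose (∑ k, T k) : ℂ)
          * (((∑ k, T k).factorial : ℂ) / ∏ k, ((T k).factorial : ℂ))
          * ((∏ k, w k ^ (P k.succ + T k)) * (∏ k, (conj (w k)) ^ (Q k.succ + T k))
              / (1 + ∑ k, (ν k : ℂ) * (w k * conj (w k)))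
                  ^ (max (∑ k, (P k.succ + T k)) (∑ k, (Q k.succ + T k)))) := by
  classical
  set X : ℂ := ∑ k, (ν k : ℂ) * (w k * conj (w k)) with hX
  set D : ℂ := 1 + X with hDdef
  have hDreal : D = ((1 + ∑ k, (ν k : ℝ) * Complex.normSq (w k) : ℝ) : ℂ) := by
    rw [hDdef, hX]
    push_cast [Complex.mul_conj]
    ring
  have hD : D ≠ 0 := by
    rw [hDreal]
    exact_mod_cast hw.ne'
  set m := min (P 0) (Q 0) with hm
  set total := ∑ k, P k with htotal
  have hp : total = P 0 + ∑ k : Fin n, P k.succ := Fin.sum_univ_succ P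
  have hq : ∑ k, Q k = Q 0 + ∑ k : Fin n, Q k.succ := Fin.sum_univ_succ Q
  have hm_le : m ≤ total := by omega
  have hmax : ∀ T : Fin n → ℕ,
      max (∑ k, (P k.succ + T k)) (∑ k, (Q k.succ + T k)) = total - m + ∑ k, T k := by
    intro T
    have h1 : ∑ k : Fin n, (P k.succ + T k) = (∑ k : Fin n, P k.succ) + ∑ k : Fin n, T k := Finset.sum_add_distrib
    have h2 : ∑ k : Fin n, (Q k.succ + T k) = (∑ k : Fin n, Q k.succ) + ∑ k : Fin n, T k := Finset.sum_add_distrib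
    rw [h1, h2]
    omega
  set A : ℂ := ∏ k, w k ^ P k.succ with hA
  set B : ℂ := ∏ k, (conj (w k)) ^ Q k.succ with hB
  set x : Fin n → ℂ := fun k => (ν k : ℂ) * (w k * conj (w k)) with hx
  set S := (Finset.Iic (fun _ => m : Fin n → ℕ)).filter (fun T => ∑ k, T k ≤ m) with hS
  set c : (Fin n → ℕ) → ℂ := fun T =>
    (-1 : ℂ) ^ (∑ k, T k) * ((m.choose (∑ k, T k)) : ℂ)
      * (((∑ k, T k).factorial : ℂ) / ∏ k, ((T k).factorial : ℂ))
      * (∏ k, x k ^ T k) * D ^ (m - ∑ k, T k) with hc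
  have step1 : ∀ T ∈ S,
      (-1 : ℂ) ^ (∑ k, T k) * (∏ k, ((ν k : ℂ)) ^ (T k))
          * ((m.choose (∑ k, T k)) : ℂ)
          * (((∑ k, T k).factorial : ℂ) / ∏ k, ((T k).factorial : ℂ))
          * ((∏ k, w k ^ (P k.succ + T k)) * (∏ k, (conj (w k)) ^ (Q k.succ + T k))
              / D ^ (max (∑ k, (P k.succ + T k)) (∑ k, (Q k.succ + T k))))
        = c T * (A * B) / D ^ total := by
    intro T hT
    have ht : ∑ k, T k ≤ m := (Finset.mem_filter.1 hT).2
    rw [hmax T]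
    have hpow : D ^ total = D ^ (total - m + ∑ k, T k) * D ^ (m - ∑ k, T k) := by
      rw [← pow_add]
      congr 1
      omega
    have hnum1 : (∏ k, w k ^ (P k.succ + T k)) = A * ∏ k, w k ^ T k := by
      rw [hA, ← Finset.prod_mul_distrib]
      exact Finset.prod_congr rfl fun k _ => pow_add _ _ _
    have hnum2 : (∏ k, (conj (w k)) ^ (Q k.succ + T k)) = B * ∏ k, (conj (w k)) ^ T k := by
      rw [hB, ← Finset.prod_mul_distrib]
      exact Finset.prod_congr rfl fun k _ => pow_add _ _ _
    have hxprod : (∏ k, x k ^ T k)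
        = (∏ k, ((ν k : ℂ)) ^ T k) * ((∏ k, w k ^ T k) * ∏ k, (conj (w k)) ^ T k) := by
      rw [← Finset.prod_mul_distrib, ← Finset.prod_mul_distrib]
      exact Finset.prod_congr rfl fun k _ => by rw [hx]; ring
    simp only [hc]
    rw [hnum1, hnum2, hxprod, ← mul_div_assoc]
    rw [div_eq_div_iff (pow_ne_zero _ hD) (pow_ne_zero _ hD), hpow]
    ring
  rw [Finset.sum_congr rfl step1]
  rw [← Finset.sum_div, ← Finset.sum_mul]
  have key : ∑ T ∈ S, c T = 1 := by
    have hSeq : S = (Finset.range (m + 1)).biUnion (fun s => Finset.piAntidiag Finset.univ s) := by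
      ext T
      simp only [hS, Finset.mem_filter, Finset.mem_Iic, Finset.mem_biUnion, Finset.mem_range,
        Finset.mem_piAntidiag, Nat.lt_succ_iff, Finset.mem_univ, implies_true, and_true]
      constructor
      · rintro ⟨-, ht⟩
        exact ⟨∑ k, T k, ht, rfl⟩
      · rintro ⟨s, hs, rfl⟩
        refine ⟨fun k => ?_, hs⟩
        exact le_trans (Finset.single_le_sum (fun i _ => Nat.zero_le _) (Finset.mem_univ k)) hs
    have hdisj : ∀ s ∈ Finset.range (m + 1), ∀ s' ∈ Finset.range (m + 1), s ≠ s' →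
        Disjoint (Finset.piAntidiag (Finset.univ : Finset (Fin n)) s)
          (Finset.piAntidiag Finset.univ s') := by
      intro s _ s' _ hss'
      refine Finset.disjoint_left.2 fun T hT hT' => hss' ?_
      rw [← (Finset.mem_piAntidiag.1 hT).1, ← (Finset.mem_piAntidiag.1 hT').1]
    rw [hSeq, Finset.sum_biUnion hdisj]
    have inner : ∀ s ∈ Finset.range (m + 1),
        ∑ T ∈ Finset.piAntidiag (Finset.univ : Finset (Fin n)) s, c T
          = (-1 : ℂ) ^ s * (m.choose s : ℂ) * X ^ s * D ^ (m - s) := by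
      intro s hs
      have hterm : ∀ T ∈ Finset.piAntidiag (Finset.univ : Finset (Fin n)) s,
          c T = (-1 : ℂ) ^ s * (m.choose s : ℂ) * D ^ (m - s)
            * ((Nat.multinomial Finset.univ T : ℂ) * ∏ k, x k ^ T k) := by
        intro T hT
        have hTs : ∑ k, T k = s := (Finset.mem_piAntidiag.1 hT).1
        have hfact : (((∑ k, T k).factorial : ℂ) / ∏ k, ((T k).factorial : ℂ))
            = (Nat.multinomial Finset.univ T : ℂ) := by
          rw [div_eq_iff]
          · rw [← Nat.cast_prod, ← Nat.cast_mul, mul_comm, Nat.multinomial_spec]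
          · rw [← Nat.cast_prod]
            exact_mod_cast (Finset.prod_pos fun k _ => Nat.factorial_pos _).ne'
        simp only [hc, hTs] at hfact ⊢
        rw [hfact]
        ring
      rw [Finset.sum_congr rfl hterm, ← Finset.mul_sum,
        ← Finset.sum_pow_eq_sum_piAntidiag Finset.univ x s, ← hX]
      ring
    rw [Finset.sum_congr rfl inner]
    have expand : ∀ s ∈ Finset.range (m + 1),
        (-1 : ℂ) ^ s * (m.choose s : ℂ) * X ^ s * D ^ (m - s)
          = (-X) ^ s * D ^ (m - s) * (m.choose s : ℂ) := by
      intro s _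
      rw [neg_pow]
      ring
    rw [Finset.sum_congr rfl expand, ← add_pow (-X) D m]
    rw [hDdef]
    norm_num
  rw [key, one_mul]
end

section
/- Continuity estimate for the lifted strict product: let K ⊂ ℂ be compact with K ∩ ({1/k : k ∈ ℕ} ∪ {0}) = ∅, and let c, C ≥ 1 be constants with c^m m! ≤ |(1/ℏ)^(↓m)| ≤ C^m m! for all ℏ ∈ K and m ∈ ℕ₀. Then for all multiindices P,Q,R,S ∈ ℕ₀^{1+n} with |P|=|Q|, |R|=|S| and all r ≥ 1: ∑_{T ≤ min{Q,R}} |(1/ℏ)^(↓|Q+R-T|)| / (|(1/ℏ)^(↓|Q|)| · |(1/ℏ)^(↓|R|)|) · T! C(Q,T) C(R,T) r^{|P+Q+R+S-2T|} ≤ (8 c^{-1} C r)^{|P+Q+R+S|}. -/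
/-!
Bound each summand separately. With `q = |Q|`, `ρ = |R|`, `t = |T|`, the two-sided
bounds on the falling factorials turn the quotient into at most
`C^(q+ρ-t) (q+ρ-t)! / (c^(q+ρ) q! ρ!)`, and `(q+ρ-t)! t! ≤ (q+ρ)! ≤ 2^(q+ρ) q! ρ!`
absorbs both the factorials and `T! ≤ t!`. The binomial products contribute `2^q 2^ρ` and
there are at most `2^q` multiindices `T ≤ min{Q,R}`, which gives `(8C/c)^(q+ρ) r^|P+Q+R+S|`.
Finally `q + ρ ≤ |P+Q+R+S|` and `8C/c ≥ 1`, since `c ≤ |1/ℏ| ≤ C`.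
-/

open Finset
open scoped Nat

theorem Nat.factorial_add_le_two_pow_mul (a b : ℕ) : (a + b)! ≤ 2 ^ (a + b) * (a ! * b !) :=
  calc (a + b)! = (a + b).choose b * a ! * b ! :=
        (Nat.add_choose_mul_factorial_mul_factorial a b).symm
    _ ≤ 2 ^ (a + b) * a ! * b ! := by gcongr; exact Nat.choose_le_two_pow _ _
    _ = 2 ^ (a + b) * (a ! * b !) := by ring

theorem Nat.factorial_tsub_mul_factorial_le {a b t : ℕ} (ht : t ≤ a + b) :
    (a + b - t)! * t ! ≤ 2 ^ (a + b) * (a ! * b !) := by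
  have hdvd := Nat.factorial_mul_factorial_dvd_factorial_add (a + b - t) t
  rw [Nat.sub_add_cancel ht] at hdvd
  exact (Nat.le_of_dvd (Nat.factorial_pos _) hdvd).trans (Nat.factorial_add_le_two_pow_mul a b)

theorem Finset.prod_factorial_le_factorial_sum {ι : Type*} (s : Finset ι) (f : ι → ℕ) :
    ∏ i ∈ s, (f i)! ≤ (∑ i ∈ s, f i)! :=
  Nat.le_of_dvd (Nat.factorial_pos _) (Nat.prod_factorial_dvd_factorial_sum s f)

theorem Finset.prod_choose_le_two_pow_sum {ι : Type*} (s : Finset ι) (f g : ι → ℕ) :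
    ∏ i ∈ s, (f i).choose (g i) ≤ 2 ^ ∑ i ∈ s, f i :=
  (prod_le_prod' fun _ _ => Nat.choose_le_two_pow _ _).trans_eq (prod_pow_eq_pow_sum _ _ _)

theorem Finset.card_Iic_min_le_two_pow_sum {ι : Type*} [Fintype ι] [DecidableEq ι]
    (f g : ι → ℕ) : #(Iic fun i => min (f i) (g i)) ≤ 2 ^ ∑ i, f i := by
  rw [Pi.card_Iic, ← prod_pow_eq_pow_sum]
  refine prod_le_prod' fun i _ => ?_
  rw [Nat.card_Iic]
  exact (Nat.succ_le_succ (min_le_left _ _)).trans Nat.lt_two_pow_self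

section FactorialBounds

variable {F : ℕ → ℝ} {c C : ℝ}

theorem div_mul_factorial_le_of_factorial_bounds (hc : 0 < c) (hC : 1 ≤ C)
    (hlow : ∀ m, c ^ m * m ! ≤ F m) (hhigh : ∀ m, F m ≤ C ^ m * m !) {q ρ t : ℕ}
    (ht : t ≤ q + ρ) : F (q + ρ - t) / (F q * F ρ) * t ! ≤ (2 * C / c) ^ (q + ρ) := by
  have hnum : F (q + ρ - t) * t ! ≤ C ^ (q + ρ) * (2 ^ (q + ρ) * (q ! * ρ !)) :=
    calc F (q + ρ - t) * t ! ≤ C ^ (q + ρ - t) * (q + ρ - t)! * t ! := by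
          gcongr; exact hhigh _
      _ ≤ C ^ (q + ρ) * ((q + ρ - t)! * t !) := by
          rw [mul_assoc]
          exact mul_le_mul_of_nonneg_right (pow_le_pow_right₀ hC (Nat.sub_le _ _)) (by positivity)
      _ ≤ C ^ (q + ρ) * (2 ^ (q + ρ) * (q ! * ρ !)) :=
          mul_le_mul_of_nonneg_left (mod_cast Nat.factorial_tsub_mul_factorial_le ht)
            (by positivity)
  have hden : c ^ q * q ! * (c ^ ρ * ρ !) ≤ F q * F ρ :=
    mul_le_mul (hlow q) (hlow ρ) (by positivity) ((by positivity : (0 : ℝ) ≤ _).trans (hlow q))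
  calc F (q + ρ - t) / (F q * F ρ) * t ! = F (q + ρ - t) * t ! / (F q * F ρ) := by ring
    _ ≤ C ^ (q + ρ) * (2 ^ (q + ρ) * (q ! * ρ !)) / (c ^ q * q ! * (c ^ ρ * ρ !)) :=
        div_le_div₀ (by positivity) hnum (by positivity) hden
    _ = (2 * C / c) ^ (q + ρ) := by
        rw [div_pow, mul_pow, pow_add c]
        field_simp

theorem summand_le_of_factorial_bounds {ι : Type*} [Fintype ι] (hc : 0 < c) (hC : 1 ≤ C)
    (hlow : ∀ m, c ^ m * m ! ≤ F m) (hhigh : ∀ m, F m ≤ C ^ m * m !) {Q R T : ι → ℕ}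
    (hT : T ≤ fun k => min (Q k) (R k)) :
    F (∑ k, (Q k + R k - T k)) / (F (∑ k, Q k) * F (∑ k, R k))
        * (∏ k, ((T k)! : ℝ)) * (∏ k, ((Q k).choose (T k) : ℝ))
        * (∏ k, ((R k).choose (T k) : ℝ))
      ≤ (4 * C / c) ^ (∑ k, Q k + ∑ k, R k) := by
  have hTQ : ∀ k, T k ≤ Q k := fun k => (hT k).trans (min_le_left _ _)
  have hsum : ∑ k, (Q k + R k - T k) = ∑ k, Q k + ∑ k, R k - ∑ k, T k := by
    rw [sum_tsub_distrib _ fun k _ => (hTQ k).trans (Nat.le_add_right _ _), sum_add_distrib]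
  have hfact : ∏ k, ((T k)! : ℝ) ≤ (∑ k, T k)! := by
    exact_mod_cast prod_factorial_le_factorial_sum univ T
  have hchooseQ : ∏ k, ((Q k).choose (T k) : ℝ) ≤ 2 ^ ∑ k, Q k := by
    exact_mod_cast prod_choose_le_two_pow_sum univ Q T
  have hchooseR : ∏ k, ((R k).choose (T k) : ℝ) ≤ 2 ^ ∑ k, R k := by
    exact_mod_cast prod_choose_le_two_pow_sum univ R T
  set q := ∑ k, Q k
  set ρ := ∑ k, R k
  set t := ∑ k, T k
  have ht : t ≤ q + ρ := (sum_le_sum fun k _ => hTQ k).trans (Nat.le_add_right _ _)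
  have hF : ∀ m, 0 ≤ F m := fun m => (by positivity : (0 : ℝ) ≤ _).trans (hlow m)
  have hratio : 0 ≤ F (q + ρ - t) / (F q * F ρ) := div_nonneg (hF _) (mul_nonneg (hF _) (hF _))
  rw [hsum]
  calc _ = F (q + ρ - t) / (F q * F ρ) * (∏ k, ((T k)! : ℝ))
          * ((∏ k, ((Q k).choose (T k) : ℝ)) * ∏ k, ((R k).choose (T k) : ℝ)) := by ring
    _ ≤ F (q + ρ - t) / (F q * F ρ) * t ! * (2 ^ q * 2 ^ ρ) :=
        mul_le_mul (mul_le_mul_of_nonneg_left hfact hratio)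
          (mul_le_mul hchooseQ hchooseR (by positivity) (by positivity)) (by positivity)
          (by positivity)
    _ ≤ (2 * C / c) ^ (q + ρ) * 2 ^ (q + ρ) := by
        rw [← pow_add]
        gcongr
        exact div_mul_factorial_le_of_factorial_bounds hc hC hlow hhigh ht
    _ = (4 * C / c) ^ (q + ρ) := by rw [← mul_pow]; ring_nf

end FactorialBounds

theorem strict_product_continuity_estimate_general
    (n : ℕ) (K : Set ℂ)
    (c C : ℝ) (hc : 1 ≤ c)
    (hlow : ∀ h ∈ K, ∀ m : ℕ,
      c ^ m * m.factorial ≤ norm (∏ j ∈ Finset.range m, (h⁻¹ - (j : ℂ))))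
    (hhigh : ∀ h ∈ K, ∀ m : ℕ,
      norm (∏ j ∈ Finset.range m, (h⁻¹ - (j : ℂ))) ≤ C ^ m * m.factorial)
    (P Q R S : Fin (n + 1) → ℕ)
    (r : ℝ) (hr : 1 ≤ r) (h : ℂ) (hh : h ∈ K) :
    ∑ T ∈ Finset.Iic (fun k => min (Q k) (R k) : Fin (n + 1) → ℕ),
      norm (∏ j ∈ Finset.range (∑ k, (Q k + R k - T k)), (h⁻¹ - (j : ℂ)))
          / (norm (∏ j ∈ Finset.range (∑ k, Q k), (h⁻¹ - (j : ℂ)))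
              * norm (∏ j ∈ Finset.range (∑ k, R k), (h⁻¹ - (j : ℂ))))
        * (∏ k, ((T k).factorial : ℝ)) * (∏ k, ((Q k).choose (T k) : ℝ))
        * (∏ k, ((R k).choose (T k) : ℝ))
        * r ^ (∑ k, (P k + Q k + R k + S k) - 2 * ∑ k, T k)
      ≤ (8 * c⁻¹ * C * r) ^ (∑ k, (P k + Q k + R k + S k)) := by
  have hcC : c ≤ C := by simpa using (hlow h hh 1).trans (hhigh h hh 1)
  have hc0 : 0 < c := zero_lt_one.trans_le hc
  have hC0 : 0 < C := hc0.trans_le hcC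
  set q := ∑ k, Q k
  set ρ := ∑ k, R k
  set N := ∑ k, (P k + Q k + R k + S k)
  have hqρN : q + ρ ≤ N := by simp only [q, ρ, N, sum_add_distrib]; omega
  calc _ ≤ ∑ _T ∈ Iic (fun k => min (Q k) (R k)), (4 * C / c) ^ (q + ρ) * r ^ N :=
        sum_le_sum fun T hT => mul_le_mul
          (summand_le_of_factorial_bounds hc0 (hc.trans hcC) (hlow h hh) (hhigh h hh)
            (mem_Iic.mp hT))
          (pow_le_pow_right₀ hr tsub_le_self) (by positivity) (by positivity)
    _ ≤ 2 ^ (q + ρ) * ((4 * C / c) ^ (q + ρ) * r ^ N) := by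
        rw [sum_const, nsmul_eq_mul]
        gcongr ?_ * _
        exact_mod_cast (card_Iic_min_le_two_pow_sum Q R).trans
          (Nat.pow_le_pow_right two_pos (Nat.le_add_right _ _))
    _ = (8 * C / c) ^ (q + ρ) * r ^ N := by rw [← mul_assoc, ← mul_pow]; ring_nf
    _ ≤ (8 * C / c) ^ N * r ^ N := by
        gcongr
        rw [le_div_iff₀ hc0]
        linarith
    _ = (8 * c⁻¹ * C * r) ^ N := by rw [← mul_pow]; ring

/-- Continuity estimate for the lifted strict product: let
`K ⊂ ℂ` be compact and disjoint from `{1/k : k ∈ ℕ} ∪ {0}`, and let `c, C ≥ 1` satisfy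
`c^m m! ≤ |(1/ℏ)^(↓m)| ≤ C^m m!` for all `ℏ ∈ K`, `m ∈ ℕ₀`.  Then for all multiindices
`P,Q,R,S ∈ ℕ₀^{1+n}` with `|P| = |Q|`, `|R| = |S|` and all `r ≥ 1`,
`∑_{T ≤ min{Q,R}} |(1/ℏ)^(↓|Q+R-T|)| / (|(1/ℏ)^(↓|Q|)| |(1/ℏ)^(↓|R|)|)
    · T! C(Q,T) C(R,T) · r^{|P+Q+R+S|-2|T|} ≤ (8 c⁻¹ C r)^{|P+Q+R+S|}`. -/
theorem strict_product_continuity_estimate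
    (n : ℕ) (K : Set ℂ) (hK : IsCompact K)
    (hKΩ : ∀ h ∈ K, h ≠ 0 ∧ ∀ k : ℕ, 1 ≤ k → h ≠ 1 / (k : ℂ))
    (c C : ℝ) (hc : 1 ≤ c) (hC : 1 ≤ C)
    (hlow : ∀ h ∈ K, ∀ m : ℕ,
      c ^ m * m.factorial ≤ norm (∏ j ∈ Finset.range m, (h⁻¹ - (j : ℂ))))
    (hhigh : ∀ h ∈ K, ∀ m : ℕ,
      norm (∏ j ∈ Finset.range m, (h⁻¹ - (j : ℂ))) ≤ C ^ m * m.factorial)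
    (P Q R S : Fin (n + 1) → ℕ)
    (hPQ : ∑ k, P k = ∑ k, Q k) (hRS : ∑ k, R k = ∑ k, S k)
    (r : ℝ) (hr : 1 ≤ r) (h : ℂ) (hh : h ∈ K) :
    ∑ T ∈ Finset.Iic (fun k => min (Q k) (R k) : Fin (n + 1) → ℕ),
      norm (∏ j ∈ Finset.range (∑ k, (Q k + R k - T k)), (h⁻¹ - (j : ℂ)))
          / (norm (∏ j ∈ Finset.range (∑ k, Q k), (h⁻¹ - (j : ℂ)))
              * norm (∏ j ∈ Finset.range (∑ k, R k), (h⁻¹ - (j : ℂ))))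
        * (∏ k, ((T k).factorial : ℝ)) * (∏ k, ((Q k).choose (T k) : ℝ))
        * (∏ k, ((R k).choose (T k) : ℝ))
        * r ^ (∑ k, (P k + Q k + R k + S k) - 2 * ∑ k, T k)
      ≤ (8 * c⁻¹ * C * r) ^ (∑ k, (P k + Q k + R k + S k)) :=
  strict_product_continuity_estimate_general n K c C hc hlow hhigh P Q R S r hr h hh
end

section
/- The Wick rotation W acting on monomials by W(z^P z̄^Q) = i^{∑_{k=s}^n (P_k+Q_k)} z^P z̄^Q intertwines the Wick star products of signature s and signature 1+n: W(z^P z̄^Q ⋆^{(s)} z^R z̄^S) = W(z^P z̄^Q) ⋆^{(1+n)} W(z^R z̄^S), where ⋆^{(s)} has sign vector ν^{(s)} with ν_k = 1 for k < s and ν_k = -1 for k ≥ s, and ⋆^{(1+n)} has all ν_k = 1. -/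
open scoped BigOperators

namespace WickStar

/-- Multiindices `P ∈ ℕ₀^{1+n}`. -/
abbrev Multi (n : ℕ) := Fin (n + 1) → ℕ

/-- Index of the monomial `z^P z̄^Q`. -/
abbrev Idx (n : ℕ) := Multi n × Multi n

/-- The free `ℂ[[λ]]`-module with basis the monomials `z^P z̄^Q`. -/
abbrev Poly (n : ℕ) := Idx n →₀ PowerSeries ℂ

/-- `sgn_ν(T) = ∏_k ν_k^{T_k}`. -/
def sgn {n : ℕ} (ν : Fin (n + 1) → ℤ) (T : Multi n) : ℂ :=
  ∏ k, ((ν k : ℂ)) ^ (T k)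

/-- The structure constant `sgn(T) λ^{|T|} T! C(Q,T) C(R,T)` of the Wick star product. -/
noncomputable def coeffT {n : ℕ} (ν : Fin (n + 1) → ℤ) (Q R T : Multi n) :
    PowerSeries ℂ :=
  PowerSeries.C (R := ℂ) (sgn ν T * (∏ k, ((T k).factorial : ℂ))
      * (∏ k, ((Q k).choose (T k) : ℂ)) * (∏ k, ((R k).choose (T k) : ℂ)))
    * PowerSeries.X ^ (∑ k, T k)

/-- The Wick star product of two basis monomials. -/
noncomputable def mulMonom {n : ℕ} (ν : Fin (n + 1) → ℤ) (PQ RS : Idx n) : Poly n :=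
  ∑ T ∈ Finset.Iic (fun k => min (PQ.2 k) (RS.1 k)),
    Finsupp.single (PQ.1 + RS.1 - T, PQ.2 + RS.2 - T) (coeffT ν PQ.2 RS.1 T)

/-- The `ℂ[[λ]]`-bilinear extension of the Wick star product. -/
noncomputable def wickMul {n : ℕ} (ν : Fin (n + 1) → ℤ) (f g : Poly n) : Poly n :=
  f.sum fun pq a => g.sum fun rs b => (a * b) • mulMonom ν pq rs

/-- The Wick-rotation degree `∑_{k=s}^n (P_k + Q_k)` of a monomial `z^P z̄^Q`. -/
def wdeg {n : ℕ} (s : ℕ) (pq : Idx n) : ℕ :=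
  ∑ k ∈ Finset.univ.filter (fun k : Fin (n + 1) => s ≤ (k : ℕ)), (pq.1 k + pq.2 k)

/-- The Wick rotation, acting on monomials by
`W(z^P z̄^Q) = i^{∑_{k=s}^n (P_k+Q_k)} z^P z̄^Q` and extended `ℂ[[λ]]`-linearly. -/
noncomputable def wrot {n : ℕ} (s : ℕ) (f : Poly n) : Poly n :=
  f.sum fun pq a => Finsupp.single pq (PowerSeries.C (R := ℂ) (Complex.I ^ wdeg s pq) * a)

end WickStar

/-!
Both sides expand over the same contractions `T ≤ min(Q, R)`. The product monomial
`z^{P+R-T} z̄^{Q+S-T}` has rotation degree `wdeg(P,Q) + wdeg(R,S) - 2 ∑_{k ≥ s} T_k`, and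
`i^{-2 T_k} = (-1)^{T_k}` is exactly the sign `ν_k^{T_k}` of signature `s` at `k ≥ s`.
-/

namespace WickStar

variable {n : ℕ}

theorem wickMul_single_single (ν : Fin (n + 1) → ℤ) (pq rs : Idx n) (a b : PowerSeries ℂ) :
    wickMul ν (Finsupp.single pq a) (Finsupp.single rs b) = (a * b) • mulMonom ν pq rs := by
  simp [wickMul, Finsupp.sum_single_index]

theorem wrot_single (s : ℕ) (pq : Idx n) (c : PowerSeries ℂ) :
    wrot s (Finsupp.single pq c)
      = Finsupp.single pq (PowerSeries.C (R := ℂ) (Complex.I ^ wdeg s pq) * c) := by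
  simp [wrot, Finsupp.sum_single_index]

theorem wrot_add (s : ℕ) (f g : Poly n) : wrot s (f + g) = wrot s f + wrot s g :=
  Finsupp.sum_add_index' (by simp) (by simp [mul_add])

theorem wrot_sum {ι : Type*} (s : ℕ) (t : Finset ι) (f : ι → Poly n) :
    wrot s (∑ i ∈ t, f i) = ∑ i ∈ t, wrot s (f i) :=
  map_sum (AddMonoidHom.mk' (wrot s) (wrot_add s)) f t

theorem wdeg_add (s : ℕ) (a b : Idx n) : wdeg s (a + b) = wdeg s a + wdeg s b := by
  simp only [wdeg, ← Finset.sum_add_distrib, Prod.fst_add, Prod.snd_add, Pi.add_apply]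
  exact Finset.sum_congr rfl fun _ _ => by ring

theorem wdeg_diag (s : ℕ) (T : Multi n) :
    wdeg s (T, T) = 2 * ∑ k ∈ Finset.univ.filter (fun k : Fin (n + 1) => s ≤ (k : ℕ)), T k := by
  simp only [wdeg, Finset.mul_sum, two_mul]

theorem sgn_one (T : Multi n) : sgn (fun _ => 1) T = 1 := by
  simp [sgn]

theorem sgn_signature (s : ℕ) (T : Multi n) :
    sgn (fun k : Fin (n + 1) => if (k : ℕ) < s then 1 else -1) T
      = (-1) ^ ∑ k ∈ Finset.univ.filter (fun k : Fin (n + 1) => s ≤ (k : ℕ)), T k := by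
  rw [← Finset.prod_pow_eq_pow_sum, Finset.prod_filter, sgn]
  refine Finset.prod_congr rfl fun k _ => ?_
  by_cases h : (k : ℕ) < s
  · simp [h, Nat.not_le.mpr h]
  · simp [h, Nat.not_lt.mp h]

theorem coeffT_eq_C_sgn_mul (ν : Fin (n + 1) → ℤ) (Q R T : Multi n) :
    coeffT ν Q R T = PowerSeries.C (R := ℂ) (sgn ν T) * coeffT (fun _ => 1) Q R T := by
  simp only [coeffT, sgn_one, one_mul, ← mul_assoc, ← map_mul]

theorem I_pow_wdeg_mul_I_pow_wdeg (s : ℕ) {P Q R S T : Multi n} (hTQ : T ≤ Q) (hTR : T ≤ R) :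
    Complex.I ^ wdeg s (P, Q) * Complex.I ^ wdeg s (R, S)
      = Complex.I ^ wdeg s (P + R - T, Q + S - T)
        * (-1) ^ ∑ k ∈ Finset.univ.filter (fun k : Fin (n + 1) => s ≤ (k : ℕ)), T k := by
  have hsplit : (P, Q) + (R, S) = (P + R - T, Q + S - T) + (T, T) := by
    ext k <;> simp only [Prod.fst_add, Prod.snd_add, Pi.add_apply, Pi.sub_apply]
    · have : T k ≤ R k := hTR k; omega
    · have : T k ≤ Q k := hTQ k; omega
  rw [← pow_add, ← wdeg_add, hsplit, wdeg_add, wdeg_diag, pow_add, pow_mul, Complex.I_sq]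

theorem wrot_mulMonom_signature (s : ℕ) (pq rs : Idx n) :
    wrot s (mulMonom (fun k : Fin (n + 1) => if (k : ℕ) < s then 1 else -1) pq rs)
      = PowerSeries.C (R := ℂ) (Complex.I ^ wdeg s pq * Complex.I ^ wdeg s rs)
        • mulMonom (fun _ => 1) pq rs := by
  rw [mulMonom, mulMonom, wrot_sum, Finset.smul_sum]
  refine Finset.sum_congr rfl fun T hT => ?_
  have hTQR := Finset.mem_Iic.mp hT
  rw [wrot_single, Finsupp.smul_single, smul_eq_mul, coeffT_eq_C_sgn_mul, sgn_signature,
    I_pow_wdeg_mul_I_pow_wdeg s (hTQR.trans inf_le_left) (hTQR.trans inf_le_right), ← mul_assoc,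
    ← map_mul]

end WickStar

theorem wick_rotation_intertwines_star_products_general
    (n s : ℕ) (P Q R S : WickStar.Multi n) :
    WickStar.wrot s
        (WickStar.wickMul (fun k : Fin (n + 1) => if (k : ℕ) < s then 1 else -1)
          (Finsupp.single (P, Q) 1) (Finsupp.single (R, S) 1))
      = WickStar.wickMul (fun _ : Fin (n + 1) => (1 : ℤ))
          (WickStar.wrot s (Finsupp.single (P, Q) 1))
          (WickStar.wrot s (Finsupp.single (R, S) 1)) := by
  rw [WickStar.wickMul_single_single, one_mul, one_smul, WickStar.wrot_mulMonom_signature,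
    WickStar.wrot_single, WickStar.wrot_single, WickStar.wickMul_single_single, mul_one, mul_one,
    ← map_mul]

/-- The Wick rotation `W(z^P z̄^Q) = i^{∑_{k=s}^n (P_k+Q_k)} z^P z̄^Q`
intertwines the Wick star product of signature `s` (sign vector `ν_k = 1` for `k < s`,
`ν_k = -1` for `k ≥ s`) and the Wick star product of signature `1+n` (all `ν_k = 1`):
`W(z^P z̄^Q ⋆^{(s)} z^R z̄^S) = W(z^P z̄^Q) ⋆^{(1+n)} W(z^R z̄^S)`. -/
theorem wick_rotation_intertwines_star_products
    (n s : ℕ) (hs1 : 1 ≤ s) (hs2 : s ≤ n + 1) (P Q R S : WickStar.Multi n) :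
    WickStar.wrot s
        (WickStar.wickMul (fun k : Fin (n + 1) => if (k : ℕ) < s then 1 else -1)
          (Finsupp.single (P, Q) 1) (Finsupp.single (R, S) 1))
      = WickStar.wickMul (fun _ : Fin (n + 1) => (1 : ℤ))
          (WickStar.wrot s (Finsupp.single (P, Q) 1))
          (WickStar.wrot s (Finsupp.single (R, S) 1)) :=
  wick_rotation_intertwines_star_products_general n s P Q R S
end

section
/- The Wick rotation intertwines the Poisson brackets of different signatures: with W(z^P z̄^Q) = i^{∑_{k=s}^n(P_k+Q_k)} z^P z̄^Q and the Poisson bracket {z^P z̄^Q, z^R z̄^S}_ν = (1/i) ∑_{k=0}^n ν_k (Q_k R_k - P_k S_k) z^{P+R-E_k} z̄^{Q+S-E_k}, one has W({f,g}_{ν^{(s)}}) = {W(f), W(g)}_{ν^{(1+n)}} for all polynomials f,g. -/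
/-!
Both sides are bilinear in `f, g`, so it suffices to compare them on two monomials
`z^P z̄^Q`, `z^R z̄^S`. The `k`-th term of their bracket has exponents `P + R - E_k`,
`Q + S - E_k`, and whenever its coefficient is nonzero both `k`-th exponents are positive, so
the Wick degree `∑_{k ≥ s} (P_k + Q_k)` drops by exactly `2` if `k ≥ s` and by `0` otherwise.
Since `i^2 = -1`, the factor `i^{wdeg}` of that term differs from `i^{wdeg(P,Q) + wdeg(R,S)}`
by precisely the sign `ν^{(s)}_k`, which turns `{·,·}_{ν^{(s)}}` into `{·,·}_{ν^{(1+n)}}`.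
-/

open scoped BigOperators

namespace WickPoisson

/-- Multiindices `P ∈ ℕ₀^{1+n}`. -/
abbrev Multi (n : ℕ) := Fin (n + 1) → ℕ

/-- Index of the monomial `z^P z̄^Q`. -/
abbrev Idx (n : ℕ) := Multi n × Multi n

/-- The polynomial algebra, as the free `ℂ`-module with basis the monomials `z^P z̄^Q`. -/
abbrev Poly (n : ℕ) := Idx n →₀ ℂ

/-- The Poisson bracket of two basis monomials:
`{z^P z̄^Q, z^R z̄^S}_ν = (1/i) ∑_k ν_k (Q_k R_k - P_k S_k) z^{P+R-E_k} z̄^{Q+S-E_k}`. -/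
noncomputable def pbMonom {n : ℕ} (ν : Fin (n + 1) → ℤ) (PQ RS : Idx n) : Poly n :=
  ∑ k, Finsupp.single (PQ.1 + RS.1 - Pi.single k 1, PQ.2 + RS.2 - Pi.single k 1)
    (Complex.I⁻¹ * (ν k : ℂ)
      * ((PQ.2 k : ℂ) * (RS.1 k : ℂ) - (PQ.1 k : ℂ) * (RS.2 k : ℂ)))

/-- The bilinear extension of the Poisson bracket to all polynomials. -/
noncomputable def poisson {n : ℕ} (ν : Fin (n + 1) → ℤ) (f g : Poly n) : Poly n :=
  f.sum fun pq a => g.sum fun rs b => (a * b) • pbMonom ν pq rs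

/-- The Wick-rotation degree `∑_{k=s}^n (P_k + Q_k)` of a monomial `z^P z̄^Q`. -/
def wdeg {n : ℕ} (s : ℕ) (pq : Idx n) : ℕ :=
  ∑ k ∈ Finset.univ.filter (fun k : Fin (n + 1) => s ≤ (k : ℕ)), (pq.1 k + pq.2 k)

/-- The Wick rotation `W(z^P z̄^Q) = i^{∑_{k=s}^n (P_k+Q_k)} z^P z̄^Q`, extended
`ℂ`-linearly. -/
noncomputable def wrot {n : ℕ} (s : ℕ) (f : Poly n) : Poly n :=
  f.sum fun pq a => Finsupp.single pq (Complex.I ^ wdeg s pq * a)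

end WickPoisson

namespace WickPoisson

open Complex

variable {n : ℕ}

lemma wrot_apply (s : ℕ) (f : Poly n) (x : Idx n) : wrot s f x = I ^ wdeg s x * f x := by
  rw [wrot, Finsupp.sum_apply, Finsupp.sum_eq_single x (fun _ _ hb => by simp [hb]) (by simp)]
  simp

lemma wrot_single (s : ℕ) (x : Idx n) (a : ℂ) :
    wrot s (Finsupp.single x a) = Finsupp.single x (I ^ wdeg s x * a) := by
  ext y
  rcases eq_or_ne x y with rfl | h <;> simp [wrot_apply, *]

lemma wrot_add (s : ℕ) (f g : Poly n) : wrot s (f + g) = wrot s f + wrot s g := by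
  ext x; simp [wrot_apply, mul_add]

lemma wrot_smul (s : ℕ) (c : ℂ) (f : Poly n) : wrot s (c • f) = c • wrot s f := by
  ext x; simp only [wrot_apply, Finsupp.smul_apply, smul_eq_mul]; ring

lemma wrot_sum (s : ℕ) {ι : Type*} (t : Finset ι) (h : ι → Poly n) :
    wrot s (∑ i ∈ t, h i) = ∑ i ∈ t, wrot s (h i) := by
  ext x; simp [wrot_apply, Finset.mul_sum]

lemma poisson_add_left (ν : Fin (n + 1) → ℤ) (f f' g : Poly n) :
    poisson ν (f + f') g = poisson ν f g + poisson ν f' g := by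
  refine Finsupp.sum_add_index (fun _ _ => by simp) fun _ _ a a' => ?_
  rw [← Finsupp.sum_add]
  exact Finsupp.sum_congr fun _ _ => by rw [add_mul, add_smul]

lemma poisson_add_right (ν : Fin (n + 1) → ℤ) (f g g' : Poly n) :
    poisson ν f (g + g') = poisson ν f g + poisson ν f g' := by
  rw [poisson, poisson, poisson, ← Finsupp.sum_add]
  refine Finsupp.sum_congr fun _ _ => Finsupp.sum_add_index (fun _ _ => by simp) fun _ _ b b' => ?_
  rw [mul_add, add_smul]

lemma poisson_single_single (ν : Fin (n + 1) → ℤ) (x y : Idx n) (a b : ℂ) :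
    poisson ν (Finsupp.single x a) (Finsupp.single y b) = (a * b) • pbMonom ν x y := by
  rw [poisson, Finsupp.sum_single_index (by simp), Finsupp.sum_single_index (by simp)]

lemma wdeg_add (s : ℕ) (x y : Idx n) : wdeg s (x + y) = wdeg s x + wdeg s y := by
  simp only [wdeg, ← Finset.sum_add_distrib, Prod.fst_add, Prod.snd_add, Pi.add_apply]
  exact Finset.sum_congr rfl fun _ _ => by ring

lemma wdeg_single_single (s : ℕ) (k : Fin (n + 1)) :
    wdeg s (Pi.single k 1, Pi.single k 1) = if s ≤ (k : ℕ) then 2 else 0 := by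
  simp [wdeg, ← two_mul, ← Finset.mul_sum, Finset.sum_pi_single']

lemma sub_single_add_single {ι : Type*} [DecidableEq ι] {m : ι → ℕ} {k : ι} (h : 1 ≤ m k) :
    m - Pi.single k 1 + Pi.single k 1 = m := by
  ext j
  rcases eq_or_ne j k with rfl | hj <;> simp [*]

lemma wdeg_eq_wdeg_sub_single_add (s : ℕ) {x : Idx n} {k : Fin (n + 1)} (h₁ : 1 ≤ x.1 k)
    (h₂ : 1 ≤ x.2 k) :
    wdeg s x
      = wdeg s (x.1 - Pi.single k 1, x.2 - Pi.single k 1) + if s ≤ (k : ℕ) then 2 else 0 := by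
  have hx : x = (x.1 - Pi.single k 1, x.2 - Pi.single k 1) + (Pi.single k 1, Pi.single k 1) := by
    rw [Prod.mk_add_mk, sub_single_add_single h₁, sub_single_add_single h₂]
  nth_rw 1 [hx]
  rw [wdeg_add, wdeg_single_single]

lemma I_pow_wdeg_eq_sign_mul (s : ℕ) {x : Idx n} {k : Fin (n + 1)} (h₁ : 1 ≤ x.1 k)
    (h₂ : 1 ≤ x.2 k) :
    I ^ wdeg s x = ((if (k : ℕ) < s then 1 else -1 : ℤ) : ℂ)
      * I ^ wdeg s (x.1 - Pi.single k 1, x.2 - Pi.single k 1) := by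
  rw [wdeg_eq_wdeg_sub_single_add s h₁ h₂, pow_add]
  split_ifs <;> first | omega | simp [mul_comm]

lemma wrot_pbMonom (s : ℕ) (x y : Idx n) :
    wrot s (pbMonom (fun k : Fin (n + 1) => if (k : ℕ) < s then 1 else -1) x y)
      = I ^ (wdeg s x + wdeg s y) • pbMonom (fun _ => 1) x y := by
  rw [pbMonom, pbMonom, wrot_sum, Finset.smul_sum]
  refine Finset.sum_congr rfl fun k _ => ?_
  rw [wrot_single, Finsupp.smul_single]
  congr 1
  set c : ℂ := (x.2 k : ℂ) * (y.1 k : ℂ) - (x.1 k : ℂ) * (y.2 k : ℂ)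
  by_cases hc : c = 0
  · simp [hc]
  -- a nonzero coefficient makes the truncated subtractions `- Pi.single k 1` exact
  have h₁ : 1 ≤ (x + y).1 k := by
    by_contra h
    have hz : x.1 k = 0 ∧ y.1 k = 0 := by simp only [Prod.fst_add, Pi.add_apply] at h; omega
    simp [c, hz] at hc
  have h₂ : 1 ≤ (x + y).2 k := by
    by_contra h
    have hz : x.2 k = 0 ∧ y.2 k = 0 := by simp only [Prod.snd_add, Pi.add_apply] at h; omega
    simp [c, hz] at hc
  rw [← wdeg_add, I_pow_wdeg_eq_sign_mul s h₁ h₂]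
  simp only [Prod.fst_add, Prod.snd_add, smul_eq_mul]
  split_ifs <;> simp

end WickPoisson

theorem wick_rotation_intertwines_poisson_brackets_general
    (n s : ℕ) (f g : WickPoisson.Poly n) :
    WickPoisson.wrot s
        (WickPoisson.poisson (fun k : Fin (n + 1) => if (k : ℕ) < s then 1 else -1) f g)
      = WickPoisson.poisson (fun _ : Fin (n + 1) => (1 : ℤ))
          (WickPoisson.wrot s f) (WickPoisson.wrot s g) := by
  open WickPoisson in
  induction f using Finsupp.induction_linear with
  | zero => simp [poisson, wrot]
  | add f f' hf hf' => rw [poisson_add_left, wrot_add, hf, hf', wrot_add, poisson_add_left]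
  | single x a =>
    induction g using Finsupp.induction_linear with
    | zero => simp [poisson, wrot]
    | add g g' hg hg' => rw [poisson_add_right, wrot_add, hg, hg', wrot_add, poisson_add_right]
    | single y b =>
      rw [poisson_single_single, wrot_smul, wrot_pbMonom, wrot_single, wrot_single,
        poisson_single_single, smul_smul, pow_add]
      congr 1
      ring

/-- The Wick rotation intertwines the Poisson brackets of signature
`s` (sign vector `ν_k = 1` for `k < s`, `ν_k = -1` for `k ≥ s`) and signature `1+n`
(all `ν_k = 1`):  `W({f,g}_{ν^{(s)}}) = {W(f), W(g)}_{ν^{(1+n)}}` for all polynomials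
`f, g`. -/
theorem wick_rotation_intertwines_poisson_brackets
    (n s : ℕ) (hs1 : 1 ≤ s) (hs2 : s ≤ n + 1) (f g : WickPoisson.Poly n) :
    WickPoisson.wrot s
        (WickPoisson.poisson (fun k : Fin (n + 1) => if (k : ℕ) < s then 1 else -1) f g)
      = WickPoisson.poisson (fun _ : Fin (n + 1) => (1 : ℤ))
          (WickPoisson.wrot s f) (WickPoisson.wrot s g) :=
  wick_rotation_intertwines_poisson_brackets_general n s f g
end
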